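/- arXiv:2605.21162 — 2 statements merged into one kernel-verified Lean document; each statement's English description precedes it below -/
import Mathlib

section
/- Let f ∈ H, Q ∈ V and u_h ∈ V with u_h − Q ∈ V₀. Suppose a(u_h, v) = ⟨f, L v⟩_H for all v ∈ V₀ and ⟨L Q, L v⟩_H = ⟨f, L v⟩_H for all v ∈ V₀. Then a(u_h − Q, u_h − Q) ≤ s(Q, Q). (End-to-end abstract version of Lemma 5.1 combined with Theorem 6.1: the energy-norm error of the LS-WG solution against the projection of the exact solution is controlled by the stabilizer evaluated at that projection, ||| u_h − Q_h u |||² ≤ s(Q_h u, Q_h u).) -/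
/-!
Testing the scheme and the consistency relation with the error `e = u_h - Q ∈ V₀` gives the
error equation `⟪L e, L e⟫ + s(u_h, e) = 0`. Expanding `s(e, e) + s(u_h, u_h)` for the
symmetric form `s` then yields the energy identity
`a(e, e) + ‖L e‖² + s(u_h, u_h) = s(Q, Q)`, and the bound follows by dropping the two
nonnegative terms.
-/

open scoped RealInnerProductSpace

section

variable {H V : Type*} [NormedAddCommGroup H] [InnerProductSpace ℝ H]
  [AddCommGroup V] [Module ℝ V]

lemma bilin_sub_sub_add_self_self (s : V →ₗ[ℝ] V →ₗ[ℝ] ℝ) (hs_symm : ∀ u v : V, s u v = s v u)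
    (u Q : V) : s (u - Q) (u - Q) + s u u = s Q Q + 2 * s u (u - Q) := by
  simp only [map_sub, LinearMap.sub_apply, hs_symm Q u]
  ring

lemma inner_map_sub_add_eq_zero_of_galerkin (V₀ : Submodule ℝ V) (L : V →ₗ[ℝ] H)
    (s : V →ₗ[ℝ] V →ₗ[ℝ] ℝ) (f : H) (Q u_h : V)
    (hscheme : ∀ v ∈ V₀, ⟪L u_h, L v⟫ + s u_h v = ⟪f, L v⟫)
    (hconsist : ∀ v ∈ V₀, ⟪L Q, L v⟫ = ⟪f, L v⟫) {v : V} (hv : v ∈ V₀) :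
    ⟪L (u_h - Q), L v⟫ + s u_h v = 0 := by
  rw [map_sub, inner_sub_left]
  linarith [hscheme v hv, hconsist v hv]

lemma lswg_energy_identity (V₀ : Submodule ℝ V) (L : V →ₗ[ℝ] H) (s : V →ₗ[ℝ] V →ₗ[ℝ] ℝ)
    (hs_symm : ∀ u v : V, s u v = s v u) (f : H) (Q u_h : V) (hmem : u_h - Q ∈ V₀)
    (hscheme : ∀ v ∈ V₀, ⟪L u_h, L v⟫ + s u_h v = ⟪f, L v⟫)
    (hconsist : ∀ v ∈ V₀, ⟪L Q, L v⟫ = ⟪f, L v⟫) :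
    (⟪L (u_h - Q), L (u_h - Q)⟫ + s (u_h - Q) (u_h - Q)) + ⟪L (u_h - Q), L (u_h - Q)⟫
      + s u_h u_h = s Q Q := by
  have herr := inner_map_sub_add_eq_zero_of_galerkin V₀ L s f Q u_h hscheme hconsist hmem
  linarith [bilin_sub_sub_add_self_self s hs_symm u_h Q]

end

/-- End-to-end abstract error estimate (Lemma 5.1 + Theorem 6.1): the LS-WG energy-norm
error against the projection `Q` of the exact solution satisfies
`a(u_h - Q, u_h - Q) ≤ s(Q, Q)`. -/
theorem lswg_energy_error_bound_full
    {H V : Type*} [NormedAddCommGroup H] [InnerProductSpace ℝ H]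
    [AddCommGroup V] [Module ℝ V]
    (V₀ : Submodule ℝ V)
    (L : V →ₗ[ℝ] H) (s : V →ₗ[ℝ] V →ₗ[ℝ] ℝ)
    (hs_symm : ∀ u v : V, s u v = s v u)
    (hs_pos : ∀ v : V, 0 ≤ s v v)
    (f : H) (Q u_h : V) (hmem : u_h - Q ∈ V₀)
    (hscheme : ∀ v ∈ V₀, ⟪L u_h, L v⟫ + s u_h v = ⟪f, L v⟫)
    (hconsist : ∀ v ∈ V₀, ⟪L Q, L v⟫ = ⟪f, L v⟫) :
    ⟪L (u_h - Q), L (u_h - Q)⟫ + s (u_h - Q) (u_h - Q) ≤ s Q Q := by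
  have hidentity := lswg_energy_identity V₀ L s hs_symm f Q u_h hmem hscheme hconsist
  linarith [real_inner_self_nonneg (x := L (u_h - Q)), hs_pos u_h]
end

section
/- Let a < b be real numbers, m ≥ 1 an integer, and w : ℝ → ℝ twice continuously differentiable. Let Q₀ denote the orthogonal projection of L²((a,b)) onto the finite-dimensional subspace P_m of (classes of) real polynomial functions of degree at most m. Then Q₀(w'') is the one-dimensional discrete weak Laplacian of the projected triple {Q₀ w, (w(a), w(b)), (w'(a), w'(b))}; that is, for every real polynomial q of degree at most m, ∫_a^b Q₀(w'')(x)·q(x) dx = ∫_a^b (Q₀ w)(x)·q''(x) dx − (w(b)q'(b) − w(a)q'(a)) + (w'(b)q(b) − w'(a)q(a)). (One-dimensional instance of the commutative property Δ_w(Q_h w) = Q₀(Δ w), Lemma 4.1.) -/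
/-! Since `w'' q - w q''` is the derivative of `w' q - w q'`, the fundamental theorem of calculus
moves both derivatives of `w''` onto `q` at the cost of the boundary terms `[w' q - w q']_a^b`.
As `q` and `q''` again have degree at most `m`, the orthogonality defining `Q₀`
lets us replace `w''` by `Q₀ w''` on the left and `w` by `Q₀ w` on the right. -/

open intervalIntegral MeasureTheory

theorem intervalIntegral.integral_mul_eq_of_integral_sub_mul_eq_zero {f g h : ℝ → ℝ} {a b : ℝ}
    (hf : IntervalIntegrable (fun x => f x * h x) volume a b)
    (hg : IntervalIntegrable (fun x => g x * h x) volume a b)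
    (h0 : ∫ x in a..b, (f x - g x) * h x = 0) :
    ∫ x in a..b, f x * h x = ∫ x in a..b, g x * h x := by
  rw [← sub_eq_zero, ← integral_sub hf hg]
  simpa only [sub_mul] using h0

theorem intervalIntegral.integral_deriv_deriv_mul_eq {u v : ℝ → ℝ}
    (hu : ContDiff ℝ 2 u) (hv : ContDiff ℝ 2 v) (a b : ℝ) :
    ∫ x in a..b, deriv (deriv u) x * v x
      = (∫ x in a..b, u x * deriv (deriv v) x)
        - (u b * deriv v b - u a * deriv v a) + (deriv u b * v b - deriv u a * v a) := by
  have hu'' : Continuous (deriv (deriv u)) := hu.deriv'.continuous_deriv le_rfl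
  have hv'' : Continuous (deriv (deriv v)) := hv.deriv'.continuous_deriv le_rfl
  have hderiv : ∀ x ∈ Set.uIcc a b,
      HasDerivAt (fun x => deriv u x * v x - u x * deriv v x)
        (deriv (deriv u) x * v x - u x * deriv (deriv v) x) x := by
    intro x _
    exact (((hu.differentiable_deriv_two x).hasDerivAt.mul
      (hv.differentiable two_ne_zero x).hasDerivAt).sub
      ((hu.differentiable two_ne_zero x).hasDerivAt.mul
        (hv.differentiable_deriv_two x).hasDerivAt)).congr_deriv (by ring)
  have hu''v : Continuous fun x => deriv (deriv u) x * v x := hu''.mul hv.continuous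
  have huv'' : Continuous fun x => u x * deriv (deriv v) x := hu.continuous.mul hv''
  have hint := integral_eq_sub_of_hasDerivAt hderiv ((hu''v.sub huv'').intervalIntegrable a b)
  rw [integral_sub (hu''v.intervalIntegrable a b) (huv''.intervalIntegrable a b)] at hint
  linarith

theorem lswg_commutative_property_1d_general
    (a b : ℝ) (m : ℕ)
    (w : ℝ → ℝ) (hw : ContDiff ℝ 2 w)
    (pw : Polynomial ℝ)
    (hpw : ∀ q : Polynomial ℝ, q.degree ≤ (m : ℕ) →
      ∫ x in a..b, (w x - pw.eval x) * q.eval x = 0)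
    (pw'' : Polynomial ℝ)
    (hpw'' : ∀ q : Polynomial ℝ, q.degree ≤ (m : ℕ) →
      ∫ x in a..b, (deriv (deriv w) x - pw''.eval x) * q.eval x = 0) :
    ∀ q : Polynomial ℝ, q.degree ≤ (m : ℕ) →
      ∫ x in a..b, pw''.eval x * q.eval x
        = (∫ x in a..b, pw.eval x * (q.derivative.derivative).eval x)
          - (w b * q.derivative.eval b - w a * q.derivative.eval a)
          + (deriv w b * q.eval b - deriv w a * q.eval a) := by
  intro q hq
  have hq'' : q.derivative.derivative.degree ≤ (m : ℕ) :=
    Polynomial.degree_derivative_le.trans (Polynomial.degree_derivative_le.trans hq)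
  have hq_smooth : ContDiff ℝ 2 fun x => q.eval x := by simpa using q.contDiff_aeval (𝕜 := ℝ) 2
  have hw'' : Continuous (deriv (deriv w)) := hw.deriv'.continuous_deriv le_rfl
  have hpoly : ∀ p : Polynomial ℝ, Continuous fun x => p.eval x := fun p => p.continuous
  calc ∫ x in a..b, pw''.eval x * q.eval x
      = ∫ x in a..b, deriv (deriv w) x * q.eval x :=
        (integral_mul_eq_of_integral_sub_mul_eq_zero
          ((hw''.mul (hpoly q)).intervalIntegrable a b)
          (((hpoly pw'').mul (hpoly q)).intervalIntegrable a b) (hpw'' q hq)).symm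
    _ = (∫ x in a..b, w x * q.derivative.derivative.eval x)
          - (w b * q.derivative.eval b - w a * q.derivative.eval a)
          + (deriv w b * q.eval b - deriv w a * q.eval a) := by
        have hq' : deriv (fun x => q.eval x) = fun x => q.derivative.eval x :=
          funext fun _ => q.deriv
        simpa only [hq', Polynomial.deriv] using integral_deriv_deriv_mul_eq hw hq_smooth a b
    _ = _ := by
        rw [integral_mul_eq_of_integral_sub_mul_eq_zero
          ((hw.continuous.mul (hpoly _)).intervalIntegrable a b)
          (((hpoly pw).mul (hpoly _)).intervalIntegrable a b) (hpw _ hq'')]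

/-- One-dimensional commutative property `Δ_w (Q_h w) = Q₀ (Δ w)` (Lemma 4.1).

Here the `L²((a,b))`-projection `Q₀` onto polynomials of degree at most `m` is
characterized by its defining orthogonality property: `pw` (resp. `pw''`) is the polynomial
of degree at most `m` whose difference with `w` (resp. `w''`) is `L²((a,b))`-orthogonal to
all polynomials of degree at most `m`.  The conclusion states that `pw'' = Q₀(w'')`
satisfies the defining relation of the discrete weak Laplacian of the projected triple
`{Q₀ w, (w(a), w(b)), (w'(a), w'(b))}`. -/
theorem lswg_commutative_property_1d
    (a b : ℝ) (hab : a < b) (m : ℕ) (hm : 1 ≤ m)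
    (w : ℝ → ℝ) (hw : ContDiff ℝ 2 w)
    (pw : Polynomial ℝ) (hpw_deg : pw.degree ≤ (m : ℕ))
    (hpw : ∀ q : Polynomial ℝ, q.degree ≤ (m : ℕ) →
      ∫ x in a..b, (w x - pw.eval x) * q.eval x = 0)
    (pw'' : Polynomial ℝ) (hpw''_deg : pw''.degree ≤ (m : ℕ))
    (hpw'' : ∀ q : Polynomial ℝ, q.degree ≤ (m : ℕ) →
      ∫ x in a..b, (deriv (deriv w) x - pw''.eval x) * q.eval x = 0) :
    ∀ q : Polynomial ℝ, q.degree ≤ (m : ℕ) →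
      ∫ x in a..b, pw''.eval x * q.eval x
        = (∫ x in a..b, pw.eval x * (q.derivative.derivative).eval x)
          - (w b * q.derivative.eval b - w a * q.derivative.eval a)
          + (deriv w b * q.eval b - deriv w a * q.eval a) :=
  lswg_commutative_property_1d_general a b m w hw pw hpw pw'' hpw''
end
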